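/- arXiv:1412.6908 — 2 statements merged into one kernel-verified Lean document; each statement's English description precedes it below -/
import Mathlib

section
/- If φ : F_n → F_n is a 1-generator endomorphism of the free group F_n of finite rank n (i.e., φ fixes all but possibly one element of some free basis of F_n), then the image φ(F_n) is an echelon subgroup of F_n. -/
/-- The rank of a subgroup: the minimal cardinality of a generating set.
For subgroups of free groups (which are free by Nielsen–Schreier) this is the
cardinality of a free basis. -/
noncomputable def rk {G : Type*} [Group G] (H : Subgroup G) : Cardinal :=
  ⨅ S : {S : Set G // Subgroup.closure S = H}, Cardinal.mk S.1

/-- A subgroup `H` is inert if `rk (H ⊓ K) ≤ rk K` for every finitely generated `K`. -/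
def IsInert {G : Type*} [Group G] (H : Subgroup G) : Prop :=
  ∀ K : Subgroup G, K.FG → rk (H ⊓ K) ≤ rk K

/-- `stage x i` is the subgroup generated by the first `i` elements of `x`. -/
def stage {n : ℕ} {F : Type*} [Group F] (x : Fin n → F) (i : ℕ) : Subgroup F :=
  Subgroup.closure (x '' {j | (j : ℕ) < i})

/-- `x` is an ordered free basis of `F`. -/
def IsOrderedBasis {n : ℕ} {F : Type*} [Group F] (x : Fin n → F) : Prop :=
  Function.Bijective (FreeGroup.lift x)

/-- `H` is in echelon form with respect to the ordered basis `x`: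
`rk (H ⊓ F_i) ≤ rk (H ⊓ F_{i-1}) + 1` for `i = 1, …, n`. -/
def InEchelonForm {n : ℕ} {F : Type*} [Group F] (x : Fin n → F) (H : Subgroup F) : Prop :=
  ∀ i : ℕ, i < n → rk (H ⊓ stage x (i + 1)) ≤ rk (H ⊓ stage x i) + 1

/-- `H` is an echelon subgroup: it is in echelon form with respect to
some ordered free basis. -/
def IsEchelon {n : ℕ} (H : Subgroup (FreeGroup (Fin n))) : Prop :=
  ∃ x : Fin n → FreeGroup (Fin n), IsOrderedBasis x ∧ InEchelonForm x H

/-- A 1-generator (subgroup) endomorphism: an endomorphism fixing all but (possibly)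
one member of some set of free generators. -/
def IsOneGenEndo {G : Type*} [Group G] (φ : G →* G) : Prop :=
  ∃ (ι : Type) (b : FreeGroupBasis ι G) (s : Set ι),
    s.Subsingleton ∧ ∀ i ∉ s, φ (b i) = b i

/-- The subgroup of points fixed by an endomorphism. -/
def fixedSubgroup {G : Type*} [Group G] (φ : G →* G) : Subgroup G where
  carrier := {g | φ g = g}
  one_mem' := by simp
  mul_mem' := by intro a b ha hb; simp only [Set.mem_setOf_eq, map_mul] at *; rw [ha, hb]
  inv_mem' := by intro a ha; simp only [Set.mem_setOf_eq, map_inv] at *; rw [ha]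

/-- An element is primitive if it belongs to some free basis. -/
def IsPrimitive {n : ℕ} (g : FreeGroup (Fin n)) : Prop :=
  ∃ x : Fin n → FreeGroup (Fin n), IsOrderedBasis x ∧ ∃ j, x j = g

/-!
Reorder a basis witnessing that `φ` is a 1-generator endomorphism so that the one generator
`φ` may move comes last. Every earlier generator is fixed, so `F_i ≤ φ(F_n)` for `i < n`,
and `φ(F_n) ∩ F_{i+1}` is generated by `F_i` together with the single element `φ(x_{i+1})`
(which is `x_{i+1}` itself unless `i + 1 = n`, when `F_n` is everything and the intersection is
`φ(F_n)`). Adding one generator raises the rank by at most one.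
-/

open Subgroup

section Rank

variable {G : Type*} [Group G]

lemma rk_closure_le_mk (S : Set G) : rk (closure S) ≤ Cardinal.mk S :=
  ciInf_le (OrderBot.bddBelow _) (⟨S, rfl⟩ : {T : Set G // closure T = closure S})

lemma exists_closure_eq_mk_eq_rk (H : Subgroup G) :
    ∃ S : Set G, closure S = H ∧ Cardinal.mk S = rk H :=
  have : Nonempty {S : Set G // closure S = H} := ⟨⟨H, closure_eq H⟩⟩
  let ⟨S, hS⟩ := ciInf_mem fun S : {S : Set G // closure S = H} => Cardinal.mk S.1
  ⟨S.1, S.2, hS⟩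

lemma rk_closure_singleton_sup_le (a : G) (K : Subgroup G) :
    rk (closure {a} ⊔ K) ≤ rk K + 1 := by
  obtain ⟨T, rfl, hT⟩ := exists_closure_eq_mk_eq_rk K
  calc rk (closure {a} ⊔ closure T) = rk (closure (insert a T)) := by
        rw [Set.insert_eq, Subgroup.closure_union]
    _ ≤ Cardinal.mk (insert a T : Set G) := rk_closure_le_mk _
    _ ≤ Cardinal.mk T + 1 := Cardinal.mk_insert_le
    _ = rk (closure T) + 1 := by rw [hT]

end Rank

lemma FreeGroupBasis.isOrderedBasis {n : ℕ} {F : Type*} [Group F]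
    (b : FreeGroupBasis (Fin n) F) : IsOrderedBasis ⇑b := by
  have h : FreeGroup.lift ⇑b = (b.repr.symm : FreeGroup (Fin n) →* F) := by
    ext j
    simp only [FreeGroup.lift_apply_of]
    rfl
  rw [IsOrderedBasis, h]
  exact b.repr.symm.bijective

lemma IsOrderedBasis.closure_range_eq_top {n : ℕ} {F : Type*} [Group F] {x : Fin n → F}
    (hx : IsOrderedBasis x) : closure (Set.range x) = ⊤ := by
  rw [← FreeGroup.range_lift_eq_closure]
  exact MonoidHom.range_eq_top.mpr hx.2

lemma FreeGroupBasis.exists_equiv_fin_of_subsingleton {n : ℕ} {ι : Type}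
    (b : FreeGroupBasis ι (FreeGroup (Fin n))) {s : Set ι} (hs : s.Subsingleton) :
    ∃ e : ι ≃ Fin n, ∀ j : Fin n, (j : ℕ) + 1 < n → e.symm j ∉ s := by
  let e₀ : ι ≃ Fin n := Equiv.ofFreeGroupEquiv b.repr.symm
  obtain rfl | ⟨i₀, rfl⟩ := hs.eq_empty_or_singleton
  · exact ⟨e₀, fun _ _ => Set.notMem_empty _⟩
  · have hn : 0 < n := (e₀ i₀).pos
    refine ⟨e₀.trans (Equiv.swap (e₀ i₀) ⟨n - 1, Nat.sub_lt hn one_pos⟩), fun j hj hji => ?_⟩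
    rw [Set.mem_singleton_iff, Equiv.symm_apply_eq] at hji
    simp only [hji, Equiv.trans_apply, Equiv.swap_apply_left] at hj
    omega

section Stage

variable {n : ℕ} {F : Type*} [Group F] (x : Fin n → F)

lemma stage_succ {i : ℕ} (hi : i < n) : stage x (i + 1) = closure {x ⟨i, hi⟩} ⊔ stage x i := by
  have : {j : Fin n | (j : ℕ) < i + 1} = insert ⟨i, hi⟩ {j : Fin n | (j : ℕ) < i} := by
    ext j
    simp only [Set.mem_ofPred_eq, Set.mem_insert_iff, Fin.ext_iff]
    omega
  rw [stage, stage, this, Set.image_insert_eq, Set.insert_eq, Subgroup.closure_union]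

lemma stage_eq_top (hx : closure (Set.range x) = ⊤) {i : ℕ} (hi : n ≤ i) : stage x i = ⊤ := by
  rw [stage, ← hx, ← Set.image_univ]
  congr 2
  exact Set.eq_univ_of_forall fun j => lt_of_lt_of_le j.isLt hi

variable {x}

lemma map_stage_eq_self {φ : F →* F} {i : ℕ} (hφ : ∀ j : Fin n, (j : ℕ) < i → φ (x j) = x j) :
    (stage x i).map φ = stage x i := by
  rw [stage, MonoidHom.map_closure, Set.image_image]
  exact congrArg Subgroup.closure (Set.image_congr hφ)

variable {φ : F →* F}

lemma range_inf_stage_eq_self (hφ : ∀ j : Fin n, (j : ℕ) + 1 < n → φ (x j) = x j)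
    {i : ℕ} (hi : i < n) : φ.range ⊓ stage x i = stage x i :=
  inf_eq_right.mpr <|
    (map_stage_eq_self fun j hj => hφ j (by omega)).symm.le.trans (map_le_range φ _)

lemma range_inf_stage_succ (hφ : ∀ j : Fin n, (j : ℕ) + 1 < n → φ (x j) = x j)
    (hx : closure (Set.range x) = ⊤) {i : ℕ} (hi : i < n) :
    φ.range ⊓ stage x (i + 1) = closure {φ (x ⟨i, hi⟩)} ⊔ stage x i := by
  have hmap : (stage x (i + 1)).map φ = closure {φ (x ⟨i, hi⟩)} ⊔ stage x i := by
    rw [stage_succ x hi, Subgroup.map_sup, MonoidHom.map_closure, Set.image_singleton,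
      map_stage_eq_self fun j hj => hφ j (by omega)]
  rcases Nat.lt_or_ge (i + 1) n with hlt | hge
  · rw [← hmap, map_stage_eq_self fun j hj => hφ j (by omega),
      range_inf_stage_eq_self hφ hlt]
  · rw [← hmap, stage_eq_top x hx hge, inf_top_eq, MonoidHom.range_eq_map]

theorem inEchelonForm_range (hφ : ∀ j : Fin n, (j : ℕ) + 1 < n → φ (x j) = x j)
    (hx : closure (Set.range x) = ⊤) : InEchelonForm x φ.range :=
  fun i hi => by
    rw [range_inf_stage_succ hφ hx hi, range_inf_stage_eq_self hφ hi]
    exact rk_closure_singleton_sup_le _ _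

end Stage

/-- The image of a 1-generator endomorphism of `F_n` is an echelon subgroup of `F_n`. -/
theorem oneGenEndo_range_isEchelon (n : ℕ) (φ : FreeGroup (Fin n) →* FreeGroup (Fin n))
    (hφ : IsOneGenEndo φ) : IsEchelon φ.range := by
  obtain ⟨ι, b, s, hs, hfix⟩ := hφ
  obtain ⟨e, he⟩ := b.exists_equiv_fin_of_subsingleton hs
  let c := b.reindex e
  have hc : ∀ j : Fin n, (j : ℕ) + 1 < n → φ (c j) = c j := fun j hj => hfix _ (he j hj)
  exact ⟨c, c.isOrderedBasis, inEchelonForm_range hc c.isOrderedBasis.closure_range_eq_top⟩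
end

section
/- Let F_n be a free group of finite rank n with 1 < n < ∞. If H is an echelon subgroup of F_n of finite index in F_n, then H = F_n. -/
/-!
Echelon form adds at most one generator per stage, so an echelon subgroup `H ≤ F_n` has rank
at most `n`. On the other hand a subgroup of index `k` in `F_n` needs at least `k(n-1)+1`
generators (Schreier). We obtain this bound by counting crossed homomorphisms from `F_n` into the
coinduced module `F_n ⧸ H → G` for `G = ℤ/2`: since `F_n` is free there are `2^(kn)` of them,
while each is determined by its values at the trivial coset on the generators of `H`, together
with its values along a transversal away from the trivial coset, so there are at most
`2^(rk H + k - 1)`. Hence `k(n-1)+1 ≤ n`, which forces `k = 1` when `n > 1`.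
-/

open Cardinal

section Rank

variable {Γ : Type*} [Group Γ]

theorem rk_le_mk_of_closure_eq {K : Subgroup Γ} {S : Set Γ} (h : Subgroup.closure S = K) :
    rk K ≤ #S :=
  ciInf_le' _ (⟨S, h⟩ : {S : Set Γ // Subgroup.closure S = K})

theorem exists_closure_eq_mk_eq_rk_s6 (K : Subgroup Γ) :
    ∃ S : Set Γ, Subgroup.closure S = K ∧ #S = rk K := by
  have : Nonempty {S : Set Γ // Subgroup.closure S = K} := ⟨⟨K, Subgroup.closure_eq K⟩⟩
  obtain ⟨⟨S, hS⟩, h⟩ := csInf_mem (Set.range_nonempty fun S :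
    {S : Set Γ // Subgroup.closure S = K} => #S.1)
  exact ⟨S, hS, h⟩

theorem rk_bot : rk (⊥ : Subgroup Γ) = 0 :=
  nonpos_iff_eq_zero.mp <| by simpa using rk_le_mk_of_closure_eq (Subgroup.closure_empty (G := Γ))

end Rank

section Echelon

variable {n : ℕ} {F : Type*} [Group F] {x : Fin n → F} {H : Subgroup F}

theorem stage_zero (x : Fin n → F) : stage x 0 = ⊥ := by
  simp [stage]

theorem stage_eq_top_s6 (hx : Function.Surjective (FreeGroup.lift x)) : stage x n = ⊤ := by
  simpa [stage, ← FreeGroup.range_lift_eq_closure] using MonoidHom.range_eq_top.mpr hx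

theorem InEchelonForm.rk_inf_stage_le (h : InEchelonForm x H) :
    ∀ i ≤ n, rk (H ⊓ stage x i) ≤ i
  | 0, _ => by simp [stage_zero, rk_bot]
  | i + 1, hi => by
    calc rk (H ⊓ stage x (i + 1)) ≤ rk (H ⊓ stage x i) + 1 := h i hi
      _ ≤ i + 1 := add_le_add_left (h.rk_inf_stage_le i (by omega)) 1
      _ = (i + 1 : ℕ) := by push_cast; rfl

theorem InEchelonForm.rk_le (h : InEchelonForm x H)
    (hx : Function.Surjective (FreeGroup.lift x)) : rk H ≤ n := by
  simpa [stage_eq_top_s6 hx] using h.rk_inf_stage_le n le_rfl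

end Echelon

namespace QuotientGroup

variable {Γ : Type*} [Group Γ] {H : Subgroup Γ}

theorem smul_mk_one (g : Γ) : g • ((1 : Γ) : Γ ⧸ H) = g := by
  simp

theorem mk_eq_mk_one_iff {g : Γ} : (g : Γ ⧸ H) = ((1 : Γ) : Γ ⧸ H) ↔ g ∈ H := by
  simp [QuotientGroup.eq]

theorem out_inv_smul (x : Γ ⧸ H) : x.out⁻¹ • x = ((1 : Γ) : Γ ⧸ H) := by
  rw [inv_smul_eq_iff, smul_mk_one, out_eq']

theorem out_inv_mul_mul_out_mem (γ : Γ) (x : Γ ⧸ H) : x.out⁻¹ * γ * (γ⁻¹ • x).out ∈ H := by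
  rw [← mk_eq_mk_one_iff, ← smul_mk_one, mul_smul, mul_smul, smul_mk_one, out_eq',
    smul_inv_smul, out_inv_smul]

end QuotientGroup

open QuotientGroup

/-- Crossed homomorphisms from `Γ` to the coinduced module `Γ ⧸ H → G`. -/
structure Cocycle {Γ : Type*} [Group Γ] (H : Subgroup Γ) (G : Type*) [CommGroup G] where
  toFun : Γ → (Γ ⧸ H) → G
  map_mul' : ∀ a b x, toFun (a * b) x = toFun a x * toFun b (a⁻¹ • x)

namespace Cocycle

section

variable {Γ : Type*} [Group Γ] {H : Subgroup Γ} {G : Type*} [CommGroup G]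

instance : CoeFun (Cocycle H G) (fun _ => Γ → (Γ ⧸ H) → G) := ⟨Cocycle.toFun⟩

theorem map_mul (f : Cocycle H G) (a b : Γ) (x : Γ ⧸ H) : f (a * b) x = f a x * f b (a⁻¹ • x) :=
  f.map_mul' a b x

@[simp]
theorem map_one (f : Cocycle H G) (x : Γ ⧸ H) : f 1 x = 1 := by
  simpa using f.map_mul 1 1 x

theorem map_inv (f : Cocycle H G) (a : Γ) (x : Γ ⧸ H) : f a⁻¹ x = (f a (a • x))⁻¹ := by
  rw [eq_inv_iff_mul_eq_one, ← map_one f (a • x), ← mul_inv_cancel a, map_mul, inv_smul_smul,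
    mul_comm]

/-- Shapiro's lemma in coordinates: `γ` factors as `x.out * h * y.out⁻¹` with `y = γ⁻¹ • x` and
`h ∈ H` fixing the trivial coset. -/
theorem apply_eq (f : Cocycle H G) (γ : Γ) (x : Γ ⧸ H) :
    f γ x = f x.out x * f (x.out⁻¹ * γ * (γ⁻¹ • x).out) ((1 : Γ) : Γ ⧸ H) *
      (f (γ⁻¹ • x).out (γ⁻¹ • x))⁻¹ := by
  set y := γ⁻¹ • x
  have hγ : γ = x.out * (x.out⁻¹ * γ * y.out) * y.out⁻¹ := by group
  conv_lhs => rw [hγ]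
  rw [map_mul, map_mul, map_inv, out_inv_smul,
    show x.out * (x.out⁻¹ * γ * y.out) = γ * y.out by group, mul_inv_rev, mul_smul,
    smul_inv_smul]

@[ext]
theorem ext {f f' : Cocycle H G} (h : ∀ γ x, f γ x = f' γ x) : f = f' := by
  cases f; cases f'; congr; funext γ x; exact h γ x

theorem apply_mk_one_eq_of_mem_closure {S : Set Γ} {f f' : Cocycle (Subgroup.closure S) G}
    (hS : ∀ s ∈ S, f s ((1 : Γ) : Γ ⧸ _) = f' s ((1 : Γ) : Γ ⧸ _)) {h : Γ}
    (hh : h ∈ Subgroup.closure S) : f h ((1 : Γ) : Γ ⧸ _) = f' h ((1 : Γ) : Γ ⧸ _) := by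
  induction hh using Subgroup.closure_induction with
  | mem s hs => exact hS s hs
  | one => simp
  | mul a b ha _ hfa hfb =>
    rw [map_mul, map_mul, smul_mk_one, mk_eq_mk_one_iff.mpr (inv_mem ha), hfa, hfb]
  | inv a ha hfa => rw [map_inv, map_inv, smul_mk_one, mk_eq_mk_one_iff.mpr ha, hfa]

theorem ext_of_closure {S : Set Γ} {f f' : Cocycle (Subgroup.closure S) G}
    (hS : ∀ s ∈ S, f s ((1 : Γ) : Γ ⧸ _) = f' s ((1 : Γ) : Γ ⧸ _))
    (hout : ∀ x : Γ ⧸ Subgroup.closure S, x ≠ ((1 : Γ) : Γ ⧸ _) → f x.out x = f' x.out x) :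
    f = f' := by
  have hout' (x : Γ ⧸ Subgroup.closure S) : f x.out x = f' x.out x := by
    by_cases hx : x = ((1 : Γ) : Γ ⧸ _)
    · have hmem : x.out ∈ Subgroup.closure S := by rw [← mk_eq_mk_one_iff, out_eq', hx]
      subst hx
      exact apply_mk_one_eq_of_mem_closure hS hmem
    · exact hout x hx
  ext γ x
  rw [apply_eq f, apply_eq f', hout', hout',
    apply_mk_one_eq_of_mem_closure hS (out_inv_mul_mul_out_mem γ x)]

end

section FreeGroup

variable {α : Type*} {H : Subgroup (FreeGroup α)} {G : Type*} [CommGroup G]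

attribute [local instance] arrowMulDistribMulAction

/-- The cocycle with prescribed values on the free generators, read off from the section
`FreeGroup α → (FreeGroup α ⧸ H → G) ⋊ FreeGroup α` sending `of i` to `(v i, of i)`. -/
noncomputable def ofGenerators (v : α → (FreeGroup α ⧸ H) → G) : Cocycle H G :=
  let σ :
      FreeGroup α →* ((FreeGroup α ⧸ H) → G) ⋊[MulDistribMulAction.toMulAut _ _] FreeGroup α :=
    FreeGroup.lift fun i => ⟨v i, .of i⟩
  have hσ (γ : FreeGroup α) : (σ γ).right = γ := by
    change (SemidirectProduct.rightHom.comp σ) γ = MonoidHom.id _ γ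
    congr 1
    ext i
    simp [σ]
  { toFun γ := (σ γ).left
    map_mul' a b x := by
      rw [_root_.map_mul, SemidirectProduct.mul_left, hσ]
      rfl }

theorem ofGenerators_apply_of (v : α → (FreeGroup α ⧸ H) → G) (i : α) :
    ofGenerators v (.of i) = v i := by
  simp [ofGenerators]

theorem ofGenerators_injective : Function.Injective (ofGenerators (H := H) (G := G)) :=
  fun v v' h => funext fun i => by rw [← ofGenerators_apply_of v, h, ofGenerators_apply_of]

end FreeGroup

end Cocycle

theorem Nat.card_subtype_ne_add_one {X : Type*} [Finite X] (a : X) :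
    Nat.card {x : X // x ≠ a} + 1 = Nat.card X := by
  have := Fintype.ofFinite X
  classical
  have : 0 < Fintype.card X := Fintype.card_pos_iff.mpr ⟨a⟩
  simp only [Nat.card_eq_fintype_card, Fintype.card_subtype_compl, Fintype.card_unique]
  omega

/-- Schreier's bound `|S| ≥ k (|α| - 1) + 1` for a generating set `S` of a subgroup of index `k`,
with the subtraction moved across. -/
theorem FreeGroup.index_mul_card_add_one_le {α : Type*} [Finite α] (S : Set (FreeGroup α))
    [Finite S] (hS : (Subgroup.closure S).index ≠ 0) :
    (Subgroup.closure S).index * Nat.card α + 1 ≤ Nat.card S + (Subgroup.closure S).index := by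
  set H := Subgroup.closure S
  have : Finite (FreeGroup α ⧸ H) := Subgroup.index_ne_zero_iff_finite.mp hS
  let G := Multiplicative (ZMod 2)
  let X' := {x : FreeGroup α ⧸ H // x ≠ ((1 : FreeGroup α) : FreeGroup α ⧸ H)}
  let restrict (f : Cocycle H G) : (S → G) × (X' → G) :=
    (fun s => f s ((1 : FreeGroup α) : FreeGroup α ⧸ H), fun x => f x.1.out x)
  have h_restrict : Function.Injective restrict := fun f f' h =>
    Cocycle.ext_of_closure (fun s hs => congrFun (congrArg Prod.fst h) ⟨s, hs⟩)
      (fun x hx => congrFun (congrArg Prod.snd h) ⟨x, hx⟩)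
  have : Finite (Cocycle H G) := Finite.of_injective _ h_restrict
  have hX' : Nat.card X' + 1 = H.index := by
    rw [Subgroup.index_eq_card, Nat.card_subtype_ne_add_one]
  have hG : Nat.card G = 2 := by simp [G, Nat.card_eq_fintype_card]
  have key : 2 ^ (H.index * Nat.card α) ≤ 2 ^ (Nat.card S + Nat.card X') := by
    calc 2 ^ (H.index * Nat.card α) = Nat.card (α → (FreeGroup α ⧸ H) → G) := by
          rw [Nat.card_fun, Nat.card_fun, hG, ← Subgroup.index_eq_card, pow_mul]
      _ ≤ Nat.card (Cocycle H G) := Nat.card_le_card_of_injective _ Cocycle.ofGenerators_injective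
      _ ≤ Nat.card ((S → G) × (X' → G)) := Nat.card_le_card_of_injective _ h_restrict
      _ = 2 ^ (Nat.card S + Nat.card X') := by
          rw [Nat.card_prod, Nat.card_fun, Nat.card_fun, hG, pow_add]
  have := (Nat.pow_le_pow_iff_right one_lt_two).mp key
  omega

/-- For `1 < n`, an echelon subgroup of finite index in `F_n` must be `F_n` itself. -/
theorem echelon_finiteIndex_eq_top (n : ℕ) (hn : 1 < n) (H : Subgroup (FreeGroup (Fin n)))
    (hH : IsEchelon H) (hfin : H.index ≠ 0) : H = ⊤ := by
  obtain ⟨x, hx, hech⟩ := hH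
  obtain ⟨S, rfl, hS⟩ := exists_closure_eq_mk_eq_rk_s6 H
  have hSn : #S ≤ n := hS ▸ hech.rk_le hx.2
  have : Finite S := Cardinal.lt_aleph0_iff_finite.mp (hSn.trans_lt natCast_lt_aleph0)
  have hcard : Nat.card S ≤ n := by rwa [← Nat.cast_card, Nat.cast_le] at hSn
  have := FreeGroup.index_mul_card_add_one_le S hfin
  rw [Nat.card_fin] at this
  refine Subgroup.index_eq_one.mp ?_
  nlinarith [Nat.pos_of_ne_zero hfin]
end
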